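/- Let a < b, n0, n1, n2 ∈ ℕ, and let B ∈ ℝ^{(n1+2n2)×(2n1+4n2)} be such that BT is invertible. Let x = (x0, x1, x2) ∈ X with fundamental state x̂ = (x0, x1', x2''). Then x = 𝒯 x̂; that is, for almost every s ∈ [a,b], (x0(s), x1(s), x2(s)) = G0(s) x̂(s) + ∫ₐˢ G1(s,θ) x̂(θ) dθ + ∫ₛᵇ G2(s,θ) x̂(θ) dθ. -/

import Mathlib

open MeasureTheory Set Matrix ENNReal

noncomputable section

/-- Boundary-full index: blocks for x1(a), x1(b), x2(a), x2(b), x2'(a), x2'(b). -/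
abbrev BfI (n1 n2 : ℕ) : Type := Fin n1 ⊕ Fin n1 ⊕ Fin n2 ⊕ Fin n2 ⊕ Fin n2 ⊕ Fin n2
/-- Boundary-core index: blocks for x1(a), x2(a), x2'(a). -/
abbrev BcI (n1 n2 : ℕ) : Type := Fin n1 ⊕ Fin n2 ⊕ Fin n2
/-- State index: blocks for the (x0, x1, x2) components. -/
abbrev StI (n0 n1 n2 : ℕ) : Type := Fin n0 ⊕ Fin n1 ⊕ Fin n2
/-- First-derivative index: blocks for (x1', x2'). -/
abbrev D1I (n1 n2 : ℕ) : Type := Fin n1 ⊕ Fin n2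

/-- The matrix T with block rows [I,0,0],[I,0,0],[0,I,0],[0,I,(b-a)I],[0,0,I],[0,0,I]. -/
def Tmat (n1 n2 : ℕ) (a b : ℝ) : Matrix (BfI n1 n2) (BcI n1 n2) ℝ :=
  Matrix.of fun r c =>
    match r, c with
    | .inl i, .inl j => if i = j then 1 else 0
    | .inr (.inl i), .inl j => if i = j then 1 else 0
    | .inr (.inr (.inl i)), .inr (.inl j) => if i = j then 1 else 0
    | .inr (.inr (.inr (.inl i))), .inr (.inl j) => if i = j then 1 else 0
    | .inr (.inr (.inr (.inl i))), .inr (.inr j) => if i = j then b - a else 0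
    | .inr (.inr (.inr (.inr (.inl i)))), .inr (.inr j) => if i = j then 1 else 0
    | .inr (.inr (.inr (.inr (.inr i)))), .inr (.inr j) => if i = j then 1 else 0
    | _, _ => 0

/-- Q(θ) with block rows [0,0,0],[0,I,0],[0,0,0],[0,0,(b-θ)I],[0,0,0],[0,0,I]. -/
def Qmat (n0 n1 n2 : ℕ) (b θ : ℝ) : Matrix (BfI n1 n2) (StI n0 n1 n2) ℝ :=
  Matrix.of fun r c =>
    match r, c with
    | .inr (.inl i), .inr (.inl j) => if i = j then 1 else 0
    | .inr (.inr (.inr (.inl i))), .inr (.inr j) => if i = j then b - θ else 0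
    | .inr (.inr (.inr (.inr (.inr i)))), .inr (.inr j) => if i = j then 1 else 0
    | _, _ => 0

/-- K(s) with block rows [0,0,0],[I,0,0],[0,I,(s-a)I]. -/
def Kmat (n0 n1 n2 : ℕ) (a s : ℝ) : Matrix (StI n0 n1 n2) (BcI n1 n2) ℝ :=
  Matrix.of fun r c =>
    match r, c with
    | .inr (.inl i), .inl j => if i = j then 1 else 0
    | .inr (.inr i), .inr (.inl j) => if i = j then 1 else 0
    | .inr (.inr i), .inr (.inr j) => if i = j then s - a else 0
    | _, _ => 0

/-- V = [[0,0,0],[0,0,I]]. -/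
def Vmat (n1 n2 : ℕ) : Matrix (D1I n1 n2) (BcI n1 n2) ℝ :=
  Matrix.of fun r c =>
    match r, c with
    | .inr i, .inr (.inr j) => if i = j then 1 else 0
    | _, _ => 0

/-- G0 = [[I,0,0],[0,0,0],[0,0,0]]. -/
def G0mat (n0 n1 n2 : ℕ) : Matrix (StI n0 n1 n2) (StI n0 n1 n2) ℝ :=
  Matrix.of fun r c =>
    match r, c with
    | .inl i, .inl j => if i = j then 1 else 0
    | _, _ => 0

/-- L1(s,θ) = [[0,0,0],[0,I,0],[0,0,(s-θ)I]]. -/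
def L1mat (n0 n1 n2 : ℕ) (s θ : ℝ) : Matrix (StI n0 n1 n2) (StI n0 n1 n2) ℝ :=
  Matrix.of fun r c =>
    match r, c with
    | .inr (.inl i), .inr (.inl j) => if i = j then 1 else 0
    | .inr (.inr i), .inr (.inr j) => if i = j then s - θ else 0
    | _, _ => 0

/-- G3 = [[0,I,0],[0,0,0]]. -/
def G3mat (n0 n1 n2 : ℕ) : Matrix (D1I n1 n2) (StI n0 n1 n2) ℝ :=
  Matrix.of fun r c =>
    match r, c with
    | .inl i, .inr (.inl j) => if i = j then 1 else 0
    | _, _ => 0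

/-- L4 = [[0,0,0],[0,0,I]]. -/
def L4mat (n0 n1 n2 : ℕ) : Matrix (D1I n1 n2) (StI n0 n1 n2) ℝ :=
  Matrix.of fun r c =>
    match r, c with
    | .inr i, .inr (.inr j) => if i = j then 1 else 0
    | _, _ => 0

/-- G2(s,θ) = -K(s) (BT)⁻¹ B Q(θ). -/
def G2fun (n0 n1 n2 : ℕ) (a b : ℝ) (B : Matrix (BcI n1 n2) (BfI n1 n2) ℝ) (s θ : ℝ) :
    Matrix (StI n0 n1 n2) (StI n0 n1 n2) ℝ :=
  -(Kmat n0 n1 n2 a s * ((B * Tmat n1 n2 a b)⁻¹ * (B * Qmat n0 n1 n2 b θ)))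

/-- G1(s,θ) = L1(s,θ) + G2(s,θ). -/
def G1fun (n0 n1 n2 : ℕ) (a b : ℝ) (B : Matrix (BcI n1 n2) (BfI n1 n2) ℝ) (s θ : ℝ) :
    Matrix (StI n0 n1 n2) (StI n0 n1 n2) ℝ :=
  L1mat n0 n1 n2 s θ + G2fun n0 n1 n2 a b B s θ

/-- G5(s,θ) = -V (BT)⁻¹ B Q(θ). -/
def G5fun (n0 n1 n2 : ℕ) (a b : ℝ) (B : Matrix (BcI n1 n2) (BfI n1 n2) ℝ) (_s θ : ℝ) :
    Matrix (D1I n1 n2) (StI n0 n1 n2) ℝ :=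
  -(Vmat n1 n2 * ((B * Tmat n1 n2 a b)⁻¹ * (B * Qmat n0 n1 n2 b θ)))

/-- G4(s,θ) = L4 + G5(s,θ). -/
def G4fun (n0 n1 n2 : ℕ) (a b : ℝ) (B : Matrix (BcI n1 n2) (BfI n1 n2) ℝ) (s θ : ℝ) :
    Matrix (D1I n1 n2) (StI n0 n1 n2) ℝ :=
  L4mat n0 n1 n2 + G5fun n0 n1 n2 a b B s θ

/-- The 3-PI (partial integral) operator with multiplier M0 and kernels M1 (below
the diagonal) and M2 (above the diagonal) on the interval [a,b]. -/
def PIop {ι κ : Type*} [Fintype ι] [Fintype κ] (a b : ℝ)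
    (M0 : ℝ → Matrix κ ι ℝ) (M1 M2 : ℝ → ℝ → Matrix κ ι ℝ)
    (x : ℝ → ι → ℝ) : ℝ → κ → ℝ := fun s =>
  (M0 s).mulVec (x s) + (∫ θ in a..s, (M1 s θ).mulVec (x θ)) +
    ∫ θ in s..b, (M2 s θ).mulVec (x θ)

/-- The unitary operator 𝒯 = P_{G0,G1,G2}. -/
def Tcal (n0 n1 n2 : ℕ) (a b : ℝ) (B : Matrix (BcI n1 n2) (BfI n1 n2) ℝ)
    (x : ℝ → StI n0 n1 n2 → ℝ) : ℝ → StI n0 n1 n2 → ℝ :=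
  PIop a b (fun _ => G0mat n0 n1 n2) (G1fun n0 n1 n2 a b B) (G2fun n0 n1 n2 a b B) x

/-- The operator ℋ = P_{G3,G4,G5}. -/
def Hcal (n0 n1 n2 : ℕ) (a b : ℝ) (B : Matrix (BcI n1 n2) (BfI n1 n2) ℝ)
    (x : ℝ → StI n0 n1 n2 → ℝ) : ℝ → D1I n1 n2 → ℝ :=
  PIop a b (fun _ => G3mat n0 n1 n2) (G4fun n0 n1 n2 a b B) (G5fun n0 n1 n2 a b B) x

/-- Stacking three component functions into a single state function. -/
def stack3 {n0 n1 n2 : ℕ} (x0 : ℝ → Fin n0 → ℝ) (x1 : ℝ → Fin n1 → ℝ)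
    (x2 : ℝ → Fin n2 → ℝ) : ℝ → StI n0 n1 n2 → ℝ :=
  fun s => Sum.elim (x0 s) (Sum.elim (x1 s) (x2 s))

/-- The vector of full boundary values (x1(a), x1(b), x2(a), x2(b), x2'(a), x2'(b)). -/
def bfvec {n1 n2 : ℕ} (x1 : ℝ → Fin n1 → ℝ) (x2 x2' : ℝ → Fin n2 → ℝ) (a b : ℝ) :
    BfI n1 n2 → ℝ :=
  Sum.elim (x1 a) (Sum.elim (x1 b) (Sum.elim (x2 a) (Sum.elim (x2 b)
    (Sum.elim (x2' a) (x2' b)))))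

/-- x1 is of Sobolev class H¹ on [a,b] with derivative x1' ∈ L². -/
def IsH1 (a b : ℝ) {n : ℕ} (x1 x1' : ℝ → Fin n → ℝ) : Prop :=
  MemLp x1' 2 (volume.restrict (Icc a b)) ∧
    ∀ s ∈ Icc a b, x1 s = x1 a + ∫ η in a..s, x1' η

/-- x2 is of Sobolev class H² on [a,b] with first derivative x2' and second
derivative x2'' ∈ L². -/
def IsH2 (a b : ℝ) {n : ℕ} (x2 x2' x2'' : ℝ → Fin n → ℝ) : Prop :=
  (∀ s ∈ Icc a b, x2 s = x2 a + ∫ η in a..s, x2' η) ∧ IsH1 a b x2' x2''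

/-- Membership of (x0,x1,x2) (with derivative data x1', x2', x2'') in the space X. -/
def InX (a b : ℝ) {n0 n1 n2 : ℕ} (B : Matrix (BcI n1 n2) (BfI n1 n2) ℝ)
    (x0 : ℝ → Fin n0 → ℝ) (x1 x1' : ℝ → Fin n1 → ℝ) (x2 x2' x2'' : ℝ → Fin n2 → ℝ) : Prop :=
  MemLp x0 2 (volume.restrict (Icc a b)) ∧ IsH1 a b x1 x1' ∧ IsH2 a b x2 x2' x2'' ∧
    B.mulVec (bfvec x1 x2 x2' a b) = 0

/-- The L² inner product on [a,b]. -/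
def L2inner {n : ℕ} (a b : ℝ) (u v : ℝ → Fin n → ℝ) : ℝ :=
  ∫ s in a..b, u s ⬝ᵥ v s

/-- The L² inner product on [a,b] for state-indexed functions. -/
def L2innerSt {n0 n1 n2 : ℕ} (a b : ℝ) (u v : ℝ → StI n0 n1 n2 → ℝ) : ℝ :=
  ∫ s in a..b, u s ⬝ᵥ v s

/-!
Taylor's formula with integral remainder writes, for `s ∈ [a, b]`,
`x(s) = G0 x̂(s) + ∫ₐˢ L1(s,θ) x̂(θ) dθ + K(s) x_c`, where `x_c = (x1(a), x2(a), x2'(a))` collects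
the core boundary values. At `s = b` the same formulas give `x_bf = T x_c + ∫ₐᵇ Q(θ) x̂(θ) dθ`, so the
boundary condition `B x_bf = 0` and the invertibility of `BT` determine
`x_c = -(BT)⁻¹ B ∫ₐᵇ Q(θ) x̂(θ) dθ` from `x̂` alone. Hence `K(s) x_c = ∫ₐᵇ G2(s,θ) x̂(θ) dθ`, and since
`G1 = L1 + G2` this integral is exactly what splits into the two partial integrals of `𝒯 x̂`.
-/

section VectorValued

variable {ι κ : Type*} [Fintype ι] [Fintype κ] {a b : ℝ}

theorem intervalIntegrable_pi_iff {f : ℝ → ι → ℝ} :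
    IntervalIntegrable f volume a b ↔ ∀ i, IntervalIntegrable (f · i) volume a b := by
  simp only [IntervalIntegrable, IntegrableOn, integrable_pi_iff, forall_and]

theorem eval_intervalIntegral {f : ℝ → ι → ℝ} (hf : IntervalIntegrable f volume a b) (i : ι) :
    (∫ θ in a..b, f θ) i = ∫ θ in a..b, f θ i :=
  ((ContinuousLinearMap.proj (R := ℝ) (φ := fun _ : ι => ℝ) i).intervalIntegral_comp_comm
    hf).symm

theorem IntervalIntegrable.sumElim {f : ℝ → ι → ℝ} {g : ℝ → κ → ℝ}
    (hf : IntervalIntegrable f volume a b) (hg : IntervalIntegrable g volume a b) :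
    IntervalIntegrable (fun θ => Sum.elim (f θ) (g θ)) volume a b := by
  rw [intervalIntegrable_pi_iff] at hf hg ⊢
  rintro (i | i)
  exacts [hf i, hg i]

theorem intervalIntegral_sumElim {f : ℝ → ι → ℝ} {g : ℝ → κ → ℝ}
    (hf : IntervalIntegrable f volume a b) (hg : IntervalIntegrable g volume a b) :
    ∫ θ in a..b, Sum.elim (f θ) (g θ) = Sum.elim (∫ θ in a..b, f θ) (∫ θ in a..b, g θ) := by
  ext (i | i) <;> simp [eval_intervalIntegral, hf, hg, hf.sumElim hg]

theorem IntervalIntegrable.const_mulVec (M : Matrix κ ι ℝ) {x : ℝ → ι → ℝ}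
    (hx : IntervalIntegrable x volume a b) :
    IntervalIntegrable (fun θ => M *ᵥ x θ) volume a b :=
  ⟨(Matrix.mulVecLin M).toContinuousLinearMap.integrable_comp hx.1,
    (Matrix.mulVecLin M).toContinuousLinearMap.integrable_comp hx.2⟩

theorem intervalIntegral_mulVec (M : Matrix κ ι ℝ) {x : ℝ → ι → ℝ}
    (hx : IntervalIntegrable x volume a b) :
    ∫ θ in a..b, M *ᵥ x θ = M *ᵥ ∫ θ in a..b, x θ :=
  (Matrix.mulVecLin M).toContinuousLinearMap.intervalIntegral_comp_comm hx

end VectorValued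

theorem eq_neg_inv_mul_mulVec_of_mulVec_add_eq_zero {m n : Type*} [Fintype m] [DecidableEq m]
    [Fintype n] {B : Matrix m n ℝ} {T : Matrix n m ℝ} (hBT : IsUnit (B * T)) {c : m → ℝ}
    {w : n → ℝ} (h : B *ᵥ (T *ᵥ c + w) = 0) :
    c = -((B * T)⁻¹ * B) *ᵥ w := by
  have hBTc : (B * T) *ᵥ c = -(B *ᵥ w) := by
    rw [← mulVec_mulVec, eq_neg_iff_add_eq_zero, ← mulVec_add, h]
  rw [neg_mulVec, ← mulVec_mulVec, ← mulVec_neg, ← hBTc, mulVec_mulVec,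
    nonsing_inv_mul _ ((isUnit_iff_isUnit_det _).1 hBT), one_mulVec]

theorem PIop_eq_add_integral_of_kernel_eq_add {ι κ : Type*} [Fintype ι] [Fintype κ]
    {a b s : ℝ} (hs : s ∈ Icc a b) {M0 : ℝ → Matrix κ ι ℝ} {M1 M2 : ℝ → ℝ → Matrix κ ι ℝ}
    {L : ℝ → Matrix κ ι ℝ} (hM1 : ∀ θ, M1 s θ = L θ + M2 s θ) {x : ℝ → ι → ℝ}
    (hL : IntervalIntegrable (fun θ => L θ *ᵥ x θ) volume a s)
    (hM2 : IntervalIntegrable (fun θ => M2 s θ *ᵥ x θ) volume a b) :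
    PIop a b M0 M1 M2 x s =
      M0 s *ᵥ x s + (∫ θ in a..s, L θ *ᵥ x θ) + ∫ θ in a..b, M2 s θ *ᵥ x θ := by
  have hM2_as : IntervalIntegrable (fun θ => M2 s θ *ᵥ x θ) volume a s :=
    hM2.mono_set (uIcc_subset_uIcc_left (uIcc_of_le (hs.1.trans hs.2) ▸ hs))
  have hM2_sb : IntervalIntegrable (fun θ => M2 s θ *ᵥ x θ) volume s b :=
    hM2.mono_set (uIcc_subset_uIcc_right (uIcc_of_le (hs.1.trans hs.2) ▸ hs))
  simp only [PIop, hM1, add_mulVec]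
  rw [intervalIntegral.integral_add hL hM2_as,
    ← intervalIntegral.integral_add_adjacent_intervals hM2_as hM2_sb]
  abel

section Taylor

variable {E : Type*} [NormedAddCommGroup E] [NormedSpace ℝ E] [CompleteSpace E] {a b : ℝ}

theorem integral_primitive_eq_integral_sub_smul {s : ℝ} (has : a ≤ s) {f : ℝ → E}
    (hf : IntegrableOn f (Ioc a s)) :
    ∫ η in a..s, ∫ θ in a..η, f θ = ∫ θ in a..s, (s - θ) • f θ := by
  -- Fubini for the indicator of the triangle `θ ≤ η` in `(a, s]²`.
  set μ := volume.restrict (Ioc a s)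
  have h_int : Integrable (Function.uncurry fun η θ => (Iic η).indicator f θ) (μ.prod μ) := by
    have h_eq : (Function.uncurry fun η θ => (Iic η).indicator f θ)
        = {p : ℝ × ℝ | p.2 ≤ p.1}.indicator (fun p => f p.2) := by
      ext p
      by_cases h : p.2 ≤ p.1 <;> simp [Function.uncurry, Set.indicator, h]
    rw [h_eq]
    refine Integrable.indicator ?_ (measurableSet_le measurable_snd measurable_fst)
    simpa using (integrable_const (1 : ℝ)).smul_prod hf
  have h_left : ∫ η in a..s, ∫ θ in a..η, f θ = ∫ η, ∫ θ, (Iic η).indicator f θ ∂μ ∂μ := by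
    rw [intervalIntegral.integral_of_le has]
    refine setIntegral_congr_fun measurableSet_Ioc fun η hη => ?_
    rw [intervalIntegral.integral_of_le hη.1.le, setIntegral_indicator measurableSet_Iic,
      Ioc_inter_Iic, inf_of_le_right hη.2]
  have h_right : ∫ θ, ∫ η, (Iic η).indicator f θ ∂μ ∂μ = ∫ θ in a..s, (s - θ) • f θ := by
    rw [intervalIntegral.integral_of_le has]
    refine setIntegral_congr_fun measurableSet_Ioc fun θ hθ => ?_
    have h_ind : (fun η => (Iic η).indicator f θ) = (Ici θ).indicator fun _ => f θ := by
      ext η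
      by_cases h : θ ≤ η <;> simp [Set.indicator, h]
    have h_inter : Ioc a s ∩ Ici θ = Icc θ s := by
      ext η
      simp only [mem_inter_iff, mem_Ioc, mem_Ici, mem_Icc]
      constructor
      · rintro ⟨⟨-, hηs⟩, hθη⟩
        exact ⟨hθη, hηs⟩
      · rintro ⟨hθη, hηs⟩
        exact ⟨⟨hθ.1.trans_le hθη, hηs⟩, hθη⟩
    rw [h_ind, setIntegral_indicator measurableSet_Ici, setIntegral_const, h_inter,
      Real.volume_real_Icc_of_le hθ.2]
  rw [h_left, integral_integral_swap h_int, h_right]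

theorem eq_add_smul_add_integral_sub_smul {x x' x'' : ℝ → E}
    (hx : ∀ s ∈ Icc a b, x s = x a + ∫ η in a..s, x' η)
    (hx' : ∀ s ∈ Icc a b, x' s = x' a + ∫ η in a..s, x'' η)
    (hx'' : IntegrableOn x'' (Icc a b)) {s : ℝ} (hs : s ∈ Icc a b) :
    x s = x a + (s - a) • x' a + ∫ θ in a..s, (s - θ) • x'' θ := by
  have hx''_as : IntegrableOn x'' (Icc a s) := hx''.mono_set (Icc_subset_Icc le_rfl hs.2)
  have h_prim : IntervalIntegrable (fun η => ∫ θ in a..η, x'' θ) volume a s :=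
    (intervalIntegral.continuousOn_primitive_interval
      (by rwa [uIcc_of_le hs.1])).intervalIntegrable
  have h_eqOn : EqOn x' (fun η => x' a + ∫ θ in a..η, x'' θ) (uIcc a s) := by
    rw [uIcc_of_le hs.1]
    exact fun η hη => hx' η ⟨hη.1, hη.2.trans hs.2⟩
  rw [hx s hs, intervalIntegral.integral_congr h_eqOn,
    intervalIntegral.integral_add intervalIntegrable_const h_prim, intervalIntegral.integral_const,
    integral_primitive_eq_integral_sub_smul hs.1 (hx''_as.mono_set Ioc_subset_Icc_self), add_assoc]

end Taylor

section Sobolev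

variable {a b : ℝ} {n : ℕ}

theorem IsH1.intervalIntegrable {x x' : ℝ → Fin n → ℝ} (h : IsH1 a b x x') {s : ℝ}
    (hs : s ∈ Icc a b) : IntervalIntegrable x' volume a s :=
  (intervalIntegrable_iff_integrableOn_Icc_of_le hs.1).2
    (IntegrableOn.mono_set (h.1.integrable one_le_two) (Icc_subset_Icc le_rfl hs.2))

theorem IsH2.eq_add_smul_add_integral {x x' x'' : ℝ → Fin n → ℝ} (h : IsH2 a b x x' x'')
    {s : ℝ} (hs : s ∈ Icc a b) :
    x s = x a + (s - a) • x' a + ∫ θ in a..s, (s - θ) • x'' θ :=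
  eq_add_smul_add_integral_sub_smul h.1 h.2.2 (h.2.1.integrable one_le_two) hs

theorem IsH2.intervalIntegrable_sub_smul {x x' x'' : ℝ → Fin n → ℝ} (h : IsH2 a b x x' x'')
    {s t : ℝ} (hs : s ∈ Icc a b) :
    IntervalIntegrable (fun θ => (t - θ) • x'' θ) volume a s :=
  (h.2.intervalIntegrable hs).continuousOn_smul (by fun_prop)

end Sobolev

section Blocks

variable {n0 n1 n2 : ℕ}

theorem G0mat_mulVec (u : Fin n0 → ℝ) (v : Fin n1 ⊕ Fin n2 → ℝ) :
    G0mat n0 n1 n2 *ᵥ Sum.elim u v = Sum.elim u 0 := by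
  ext (i | i | i) <;> simp [G0mat, mulVec, dotProduct, Fintype.sum_sum_type, ite_mul]

theorem L1mat_mulVec (s θ : ℝ) (u : Fin n0 → ℝ) (v : Fin n1 → ℝ) (w : Fin n2 → ℝ) :
    L1mat n0 n1 n2 s θ *ᵥ Sum.elim u (Sum.elim v w) =
      Sum.elim (0 : Fin n0 → ℝ) (Sum.elim v ((s - θ) • w)) := by
  ext (i | i | i) <;> simp [L1mat, mulVec, dotProduct, Fintype.sum_sum_type, ite_mul]

theorem Kmat_mulVec (a s : ℝ) (p : Fin n1 → ℝ) (q r : Fin n2 → ℝ) :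
    Kmat n0 n1 n2 a s *ᵥ Sum.elim p (Sum.elim q r) =
      Sum.elim (0 : Fin n0 → ℝ) (Sum.elim p (q + (s - a) • r)) := by
  ext (i | i | i) <;> simp [Kmat, mulVec, dotProduct, Fintype.sum_sum_type, ite_mul]

theorem Tmat_mulVec (a b : ℝ) (p : Fin n1 → ℝ) (q r : Fin n2 → ℝ) :
    Tmat n1 n2 a b *ᵥ Sum.elim p (Sum.elim q r) =
      Sum.elim p (Sum.elim p (Sum.elim q (Sum.elim (q + (b - a) • r) (Sum.elim r r)))) := by
  ext (i | i | i | i | i | i) <;> simp [Tmat, mulVec, dotProduct, Fintype.sum_sum_type, ite_mul]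

theorem Qmat_mulVec (b θ : ℝ) (u : Fin n0 → ℝ) (v : Fin n1 → ℝ) (w : Fin n2 → ℝ) :
    Qmat n0 n1 n2 b θ *ᵥ Sum.elim u (Sum.elim v w) =
      Sum.elim (0 : Fin n1 → ℝ) (Sum.elim v (Sum.elim (0 : Fin n2 → ℝ)
        (Sum.elim ((b - θ) • w) (Sum.elim (0 : Fin n2 → ℝ) w)))) := by
  ext (i | i | i | i | i | i) <;> simp [Qmat, mulVec, dotProduct, Fintype.sum_sum_type, ite_mul]

theorem G2fun_mulVec (a b : ℝ) (B : Matrix (BcI n1 n2) (BfI n1 n2) ℝ) (s θ : ℝ)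
    (v : StI n0 n1 n2 → ℝ) :
    G2fun n0 n1 n2 a b B s θ *ᵥ v =
      Kmat n0 n1 n2 a s *ᵥ (-((B * Tmat n1 n2 a b)⁻¹ * B) *ᵥ (Qmat n0 n1 n2 b θ *ᵥ v)) := by
  simp only [G2fun, Matrix.neg_mul, neg_mulVec, mulVec_neg, mulVec_mulVec, Matrix.mul_assoc]

end Blocks

section Kernels

variable {n0 n1 n2 : ℕ} {a b u v : ℝ} {B : Matrix (BcI n1 n2) (BfI n1 n2) ℝ}
  {x : ℝ → StI n0 n1 n2 → ℝ}

theorem intervalIntegrable_G2fun_mulVec (s : ℝ)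
    (hQ : IntervalIntegrable (fun θ => Qmat n0 n1 n2 b θ *ᵥ x θ) volume u v) :
    IntervalIntegrable (fun θ => G2fun n0 n1 n2 a b B s θ *ᵥ x θ) volume u v := by
  simp only [G2fun_mulVec]
  exact (hQ.const_mulVec _).const_mulVec _

theorem integral_G2fun_mulVec (s : ℝ)
    (hQ : IntervalIntegrable (fun θ => Qmat n0 n1 n2 b θ *ᵥ x θ) volume u v) :
    ∫ θ in u..v, G2fun n0 n1 n2 a b B s θ *ᵥ x θ =
      Kmat n0 n1 n2 a s *ᵥ
        (-((B * Tmat n1 n2 a b)⁻¹ * B) *ᵥ ∫ θ in u..v, Qmat n0 n1 n2 b θ *ᵥ x θ) := by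
  simp only [G2fun_mulVec]
  rw [intervalIntegral_mulVec _ (hQ.const_mulVec _), intervalIntegral_mulVec _ hQ]

end Kernels

def bcvec {n1 n2 : ℕ} (x1 : ℝ → Fin n1 → ℝ) (x2 x2' : ℝ → Fin n2 → ℝ) (a : ℝ) :
    BcI n1 n2 → ℝ :=
  Sum.elim (x1 a) (Sum.elim (x2 a) (x2' a))

section Representation

variable {a b : ℝ} {n0 n1 n2 : ℕ} {x0 : ℝ → Fin n0 → ℝ} {x1 x1' : ℝ → Fin n1 → ℝ}
  {x2 x2' x2'' : ℝ → Fin n2 → ℝ}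

theorem intervalIntegrable_Qmat_mulVec_stack3 (hx1 : IsH1 a b x1 x1')
    (hx2 : IsH2 a b x2 x2' x2'') (hab : a ≤ b) :
    IntervalIntegrable (fun θ => Qmat n0 n1 n2 b θ *ᵥ stack3 x0 x1' x2'' θ) volume a b := by
  have hb : b ∈ Icc a b := ⟨hab, le_rfl⟩
  have h0 {m : ℕ} : IntervalIntegrable (fun _ => (0 : Fin m → ℝ)) volume a b :=
    intervalIntegrable_const
  simp only [stack3, Qmat_mulVec]
  exact h0.sumElim ((hx1.intervalIntegrable hb).sumElim (h0.sumElim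
    ((hx2.intervalIntegrable_sub_smul hb).sumElim (h0.sumElim (hx2.2.intervalIntegrable hb)))))

theorem intervalIntegrable_L1mat_mulVec_stack3 (hx1 : IsH1 a b x1 x1')
    (hx2 : IsH2 a b x2 x2' x2'') {s : ℝ} (hs : s ∈ Icc a b) :
    IntervalIntegrable (fun θ => L1mat n0 n1 n2 s θ *ᵥ stack3 x0 x1' x2'' θ) volume a s := by
  simp only [stack3, L1mat_mulVec]
  exact intervalIntegrable_const.sumElim
    ((hx1.intervalIntegrable hs).sumElim (hx2.intervalIntegrable_sub_smul hs))

theorem stack3_eq_G0mat_add_integral_L1mat_add_Kmat (hx1 : IsH1 a b x1 x1')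
    (hx2 : IsH2 a b x2 x2' x2'') {s : ℝ} (hs : s ∈ Icc a b) :
    stack3 x0 x1 x2 s = G0mat n0 n1 n2 *ᵥ stack3 x0 x1' x2'' s
      + (∫ θ in a..s, L1mat n0 n1 n2 s θ *ᵥ stack3 x0 x1' x2'' θ)
      + Kmat n0 n1 n2 a s *ᵥ bcvec x1 x2 x2' a := by
  have h1 := hx1.intervalIntegrable hs
  have h2 := hx2.intervalIntegrable_sub_smul (t := s) hs
  simp only [stack3, G0mat_mulVec, L1mat_mulVec, bcvec, Kmat_mulVec]
  rw [intervalIntegral_sumElim intervalIntegrable_const (h1.sumElim h2),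
    intervalIntegral_sumElim h1 h2, hx1.2 s hs, hx2.eq_add_smul_add_integral hs]
  simp only [intervalIntegral.integral_const, smul_zero, zero_add, add_zero, ← Sum.elim_add_add]
  congr 2 <;> abel

theorem bfvec_eq_Tmat_add_integral_Qmat (hx1 : IsH1 a b x1 x1') (hx2 : IsH2 a b x2 x2' x2'')
    (hab : a ≤ b) :
    bfvec x1 x2 x2' a b = Tmat n1 n2 a b *ᵥ bcvec x1 x2 x2' a
      + ∫ θ in a..b, Qmat n0 n1 n2 b θ *ᵥ stack3 x0 x1' x2'' θ := by
  have hb : b ∈ Icc a b := ⟨hab, le_rfl⟩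
  have h1 := hx1.intervalIntegrable hb
  have h2 := hx2.intervalIntegrable_sub_smul (t := b) hb
  have h3 := hx2.2.intervalIntegrable hb
  have h0 {m : ℕ} : IntervalIntegrable (fun _ => (0 : Fin m → ℝ)) volume a b :=
    intervalIntegrable_const
  simp only [stack3, Qmat_mulVec, bcvec, Tmat_mulVec, bfvec]
  rw [intervalIntegral_sumElim h0 (h1.sumElim (h0.sumElim (h2.sumElim (h0.sumElim h3)))),
    intervalIntegral_sumElim h1 (h0.sumElim (h2.sumElim (h0.sumElim h3))),
    intervalIntegral_sumElim h0 (h2.sumElim (h0.sumElim h3)),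
    intervalIntegral_sumElim h2 (h0.sumElim h3), intervalIntegral_sumElim h0 h3,
    hx1.2 b hb, hx2.eq_add_smul_add_integral hb, hx2.2.2 b hb]
  simp only [intervalIntegral.integral_const, smul_zero, add_zero, ← Sum.elim_add_add]

end Representation

theorem stmt6_general (a b : ℝ) (n0 n1 n2 : ℕ)
    (B : Matrix (BcI n1 n2) (BfI n1 n2) ℝ)
    (hBT : IsUnit (B * Tmat n1 n2 a b))
    (x0 : ℝ → Fin n0 → ℝ) (x1 x1' : ℝ → Fin n1 → ℝ) (x2 x2' x2'' : ℝ → Fin n2 → ℝ)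
    (hX : InX a b B x0 x1 x1' x2 x2' x2'') :
    ∀ᵐ s ∂(volume.restrict (Icc a b)),
      stack3 x0 x1 x2 s = Tcal n0 n1 n2 a b B (stack3 x0 x1' x2'') s := by
  obtain ⟨-, hx1, hx2, hB⟩ := hX
  filter_upwards [ae_restrict_mem measurableSet_Icc] with s hs
  have hab : a ≤ b := hs.1.trans hs.2
  have hQ := intervalIntegrable_Qmat_mulVec_stack3 (x0 := x0) hx1 hx2 hab
  have hc : bcvec x1 x2 x2' a = -((B * Tmat n1 n2 a b)⁻¹ * B) *ᵥ
      ∫ θ in a..b, Qmat n0 n1 n2 b θ *ᵥ stack3 x0 x1' x2'' θ :=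
    eq_neg_inv_mul_mulVec_of_mulVec_add_eq_zero hBT
      (bfvec_eq_Tmat_add_integral_Qmat hx1 hx2 hab ▸ hB)
  rw [Tcal, PIop_eq_add_integral_of_kernel_eq_add hs (fun θ => rfl)
    (intervalIntegrable_L1mat_mulVec_stack3 hx1 hx2 hs) (intervalIntegrable_G2fun_mulVec s hQ),
    integral_G2fun_mulVec s hQ, ← hc]
  exact stack3_eq_G0mat_add_integral_L1mat_add_Kmat hx1 hx2 hs

/-- for x ∈ X with fundamental state x̂ = (x0, x1', x2''),
one has x = 𝒯 x̂. -/
theorem stmt6 (a b : ℝ) (hab : a < b) (n0 n1 n2 : ℕ)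
    (B : Matrix (BcI n1 n2) (BfI n1 n2) ℝ)
    (hBT : IsUnit (B * Tmat n1 n2 a b))
    (x0 : ℝ → Fin n0 → ℝ) (x1 x1' : ℝ → Fin n1 → ℝ) (x2 x2' x2'' : ℝ → Fin n2 → ℝ)
    (hX : InX a b B x0 x1 x1' x2 x2' x2'') :
    ∀ᵐ s ∂(volume.restrict (Icc a b)),
      stack3 x0 x1 x2 s = Tcal n0 n1 n2 a b B (stack3 x0 x1' x2'') s :=
  stmt6_general a b n0 n1 n2 B hBT x0 x1 x1' x2 x2' x2'' hX

end
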